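/- Let τ = (1+√5)/2 be the golden ratio. Identify ℝ³ with the pure quaternions via (x,y,z) ↦ x i + y j + z k. Let R be the set of the 30 unit roots of H₃, namely ±i, ±j, ±k together with all cyclic permutations of the pure quaternions ½(±1·i ± τ·j ± τ⁻¹·k). Then the subgroup of the unit group ℍˣ of the real quaternions generated by all products p·q with p, q ∈ R has exactly 120 elements; that is, the 30 reflections of the icosahedral group H₃ generate exactly 120 rotors. -/

import Mathlib

noncomputable section

/-- The golden ratio `τ = (1+√5)/2`. -/
def τ : ℝ := (1 + Real.sqrt 5) / 2

/-- The quaternion unit `i`. -/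
def qi : Quaternion ℝ := ⟨0, 1, 0, 0⟩
/-- The quaternion unit `j`. -/
def qj : Quaternion ℝ := ⟨0, 0, 1, 0⟩
/-- The quaternion unit `k`. -/
def qk : Quaternion ℝ := ⟨0, 0, 0, 1⟩

/-- The sign set `{1, -1}`. -/
def pm : Set ℝ := {1, -1}

/-- The 30 unit roots of `H₃`: `±i, ±j, ±k` together with all cyclic
permutations of the pure quaternions `½(±1·i ± τ·j ± τ⁻¹·k)`. -/
def rootsH3 : Set (Quaternion ℝ) :=
  {x | (∃ ε ∈ pm, x = ε • qi ∨ x = ε • qj ∨ x = ε • qk) ∨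
    (∃ ε₁ ∈ pm, ∃ ε₂ ∈ pm, ∃ ε₃ ∈ pm,
      (x = (2 : ℝ)⁻¹ • (ε₁ • qi + (ε₂ * τ) • qj + (ε₃ * τ⁻¹) • qk) ∨
       x = (2 : ℝ)⁻¹ • ((ε₃ * τ⁻¹) • qi + ε₁ • qj + (ε₂ * τ) • qk) ∨
       x = (2 : ℝ)⁻¹ • ((ε₂ * τ) • qi + (ε₃ * τ⁻¹) • qj + ε₁ • qk)))}

/-- The set of units of ℍ of the form `p·q` with `p, q` unit roots of `H₃`
(the rotors encoding composed reflections of the icosahedral group). -/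
def rotorGenH3 : Set (Quaternion ℝ)ˣ :=
  {u | ∃ p ∈ rootsH3, ∃ q ∈ rootsH3, (u : Quaternion ℝ) = p * q}

/-!
The 120 unit icosians `±1, ±i, ±j, ±k`, `½(±1 ± i ± j ± k)` and the even coordinate permutations
of `½(±i ± τ j ± τ⁻¹ k)` form the binary icosahedral group `2I`. Doubled, they have coordinates
in `ℤ[φ] = ℤ[X]/(X² - X - 1)`, so every product needed below is an exact finite computation.

Let `H` be the subgroup generated by `i`, `j`, `a = ½(-1 + i + j + k)` and `b = ½(τ⁻¹ + τ i + j)`.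
Left multiplication by these four maps the 120 icosians into themselves, so `H ⊆ 2I`. On the other
hand `H` contains the quaternion group of order 8 and the elements `a`, `b` of orders 3 and 5, so
`120` divides `|H|` and `H = 2I`. The four generators are products of two roots, and for the root
`r = i` every rotor is `p q = (p r)(r r)(q r)⁻¹` with each `x r` an icosian; hence the rotors
generate exactly `H`.
-/

open Quaternion
open scoped Pointwise

section GroupLemmas

variable {G : Type*} [Group G]

theorem Subgroup.closure_subset_of_mul_mem {A T : Set G} (hT : T.Finite) (h1 : 1 ∈ T)
    (hA : ∀ a ∈ A, ∀ t ∈ T, a * t ∈ T) : (Subgroup.closure A : Set G) ⊆ T := by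
  have hle : Subgroup.closure A ≤ MulAction.stabilizer G T :=
    (Subgroup.closure_le _).2 fun a ha => (MulAction.mem_stabilizer_set' hT).2 (hA a ha)
  intro g hg
  simpa using (MulAction.mem_stabilizer_set' hT).1 (hle hg) h1

theorem Subgroup.coe_eq_and_card_eq_of_subset {H : Subgroup G} {T : Set G} {n : ℕ}
    (hT : T.Finite) (hHT : (H : Set G) ⊆ T) (hTn : T.ncard ≤ n) (hn : n ∣ Nat.card H) :
    (H : Set G) = T ∧ Nat.card H = n := by
  have hcard : Nat.card H = (H : Set G).ncard := Nat.card_coe_set_eq _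
  have hle : (H : Set G).ncard ≤ T.ncard := Set.ncard_le_ncard hHT hT
  have hpos : 0 < Nat.card H := Nat.card_pos_iff.2 ⟨inferInstance, (hT.subset hHT).to_subtype⟩
  have hge : n ≤ Nat.card H := Nat.le_of_dvd hpos hn
  exact ⟨Set.eq_of_subset_of_ncard_le hHT (by omega) hT, by omega⟩

theorem mul_eq_mul_mul_mul_inv {x y r : G} (h : r * r = y * y) :
    x * y = x * r * (r * r) * (y * r)⁻¹ := by
  calc x * y = x * (y * y) * y⁻¹ := by group
    _ = x * r * (r * r) * (y * r)⁻¹ := by rw [← h]; group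

end GroupLemmas

theorem τ_eq_goldenRatio : τ = Real.goldenRatio := rfl

theorem inv_τ : τ⁻¹ = τ - 1 := by
  rw [τ_eq_goldenRatio, Real.inv_goldenRatio, ← Real.one_sub_goldenRatio]
  ring

abbrev GoldenInt := QuadraticAlgebra ℤ 1 1

namespace GoldenInt

def toReal : GoldenInt →+* ℝ :=
  (QuadraticAlgebra.lift ⟨τ, by
    rw [one_smul, one_smul, τ_eq_goldenRatio, ← sq, Real.goldenRatio_sq, add_comm]⟩).toRingHom

theorem toReal_apply (x : GoldenInt) : toReal x = x.re + x.im * τ := by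
  simp [toReal, zsmul_eq_mul]

theorem toReal_mk_int (n : ℤ) : toReal ⟨n, 0⟩ = n := by
  simp [toReal_apply]

theorem toReal_mk_mul_φ (n : ℤ) : toReal ⟨0, n⟩ = n * τ := by
  simp [toReal_apply]

theorem toReal_mk_mul_φ_inv (n : ℤ) : toReal ⟨-n, n⟩ = n * τ⁻¹ := by
  rw [toReal_apply, inv_τ]
  push_cast
  ring

theorem toReal_injective : Function.Injective toReal := by
  refine (injective_iff_map_eq_zero _).2 fun x hx => ?_
  rw [toReal_apply] at hx
  have him : x.im = 0 := by
    by_contra h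
    refine Real.goldenRatio_irrational.ne_rat (-x.re / x.im) ?_
    push_cast
    rw [← τ_eq_goldenRatio]
    field_simp
    linarith
  ext <;> simp_all

def fastMul (x y : GoldenInt) : GoldenInt :=
  ⟨x.re * y.re + x.im * y.im, x.re * y.im + x.im * y.re + x.im * y.im⟩

theorem fastMul_eq_mul (x y : GoldenInt) : fastMul x y = x * y := by
  ext <;> simp [fastMul]

end GoldenInt

namespace Quaternion

variable {R S : Type*} [CommRing R] [CommRing S]

def mapCoeffs (f : R →+* S) (x : ℍ[R]) : ℍ[S] := ⟨f x.re, f x.imI, f x.imJ, f x.imK⟩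

@[simp] theorem re_mapCoeffs (f : R →+* S) (x : ℍ[R]) : (mapCoeffs f x).re = f x.re := rfl
@[simp] theorem imI_mapCoeffs (f : R →+* S) (x : ℍ[R]) : (mapCoeffs f x).imI = f x.imI := rfl
@[simp] theorem imJ_mapCoeffs (f : R →+* S) (x : ℍ[R]) : (mapCoeffs f x).imJ = f x.imJ := rfl
@[simp] theorem imK_mapCoeffs (f : R →+* S) (x : ℍ[R]) : (mapCoeffs f x).imK = f x.imK := rfl

def map (f : R →+* S) : ℍ[R] →+* ℍ[S] where
  toFun := mapCoeffs f
  map_one' := by ext <;> simp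
  map_zero' := by ext <;> simp
  map_add' x y := by ext <;> simp
  map_mul' x y := by ext <;> simp

theorem map_injective {f : R →+* S} (hf : Function.Injective f) :
    Function.Injective (map f) := fun _ _ h => by
  ext
  exacts [hf (congrArg QuaternionAlgebra.re h), hf (congrArg QuaternionAlgebra.imI h),
    hf (congrArg QuaternionAlgebra.imJ h), hf (congrArg QuaternionAlgebra.imK h)]

/-- Stated with the instances of `ℍ[R]`, so that it applies to quaternions such as `qi` once they
are unfolded to structure literals. -/
theorem smul_mk (r a b c d : R) :
    @HSMul.hSMul R ℍ[R] ℍ[R] _ r ⟨a, b, c, d⟩ = ⟨r * a, r * b, r * c, r * d⟩ := rfl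

theorem mk_add_mk (a b c d a' b' c' d' : R) :
    @HAdd.hAdd ℍ[R] ℍ[R] ℍ[R] _ ⟨a, b, c, d⟩ ⟨a', b', c', d'⟩ =
      ⟨a + a', b + b', c + c', d + d'⟩ := rfl

end Quaternion

namespace Icosian

/-- Decided on the eight integer coordinates, which keeps kernel evaluation cheap. -/
instance : DecidableEq ℍ[GoldenInt] := fun x y =>
  decidable_of_iff (x.re.re = y.re.re ∧ x.re.im = y.re.im ∧ x.imI.re = y.imI.re ∧
      x.imI.im = y.imI.im ∧ x.imJ.re = y.imJ.re ∧ x.imJ.im = y.imJ.im ∧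
      x.imK.re = y.imK.re ∧ x.imK.im = y.imK.im) <| by
    constructor
    · rintro ⟨h1, h2, h3, h4, h5, h6, h7, h8⟩
      ext <;> assumption
    · rintro rfl
      simp

/-- The product written out coordinatewise: the kernel evaluates this several times faster
than the generic multiplication of `ℍ[GoldenInt]`. -/
def fastMul (a b : ℍ[GoldenInt]) : ℍ[GoldenInt] :=
  let m := GoldenInt.fastMul
  ⟨m a.re b.re - m a.imI b.imI - m a.imJ b.imJ - m a.imK b.imK,
   m a.re b.imI + m a.imI b.re + m a.imJ b.imK - m a.imK b.imJ,
   m a.re b.imJ - m a.imI b.imK + m a.imJ b.re + m a.imK b.imI,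
   m a.re b.imK + m a.imI b.imJ - m a.imJ b.imI + m a.imK b.re⟩

theorem fastMul_eq_mul (a b : ℍ[GoldenInt]) : fastMul a b = a * b := by
  ext <;> simp [fastMul, GoldenInt.fastMul_eq_mul]

/-- Model quaternions are stored doubled, so that the icosians get coordinates in `ℤ[φ]`. -/
def embed (x : ℍ[GoldenInt]) : ℍ[ℝ] := (2 : ℝ)⁻¹ • Quaternion.map GoldenInt.toReal x

theorem embed_mk (a b c d : GoldenInt) :
    embed ⟨a, b, c, d⟩ = ⟨2⁻¹ * GoldenInt.toReal a, 2⁻¹ * GoldenInt.toReal b,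
      2⁻¹ * GoldenInt.toReal c, 2⁻¹ * GoldenInt.toReal d⟩ := rfl

theorem embed_injective : Function.Injective embed := fun _ _ h =>
  Quaternion.map_injective GoldenInt.toReal_injective
    (smul_right_injective _ (inv_ne_zero two_ne_zero) h)

theorem embed_ne_zero {x : ℍ[GoldenInt]} (hx : x ≠ 0) : embed x ≠ 0 := by
  have h0 : embed 0 = 0 := by simp [embed]
  exact fun h => hx (embed_injective (h.trans h0.symm))

theorem embed_two : embed 2 = 1 := by
  rw [embed, map_ofNat, ← map_ofNat (algebraMap ℝ ℍ[ℝ]) 2, Algebra.smul_def, ← map_mul,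
    inv_mul_cancel₀ two_ne_zero, map_one]

theorem embed_mul_embed (x y : ℍ[GoldenInt]) :
    embed x * embed y = (2 : ℝ)⁻¹ • embed (x * y) := by
  simp only [embed, map_mul, smul_mul_smul_comm, smul_smul]

theorem embed_mul_embed_of_eq {x y z : ℍ[GoldenInt]} (h : x * y = z + z) :
    embed x * embed y = embed z := by
  rw [embed_mul_embed, h, embed, embed, map_add, ← two_smul ℝ, smul_smul, smul_smul]
  norm_num

theorem embed_pow_eq_one {x : ℍ[GoldenInt]} {n : ℕ} (hn : n ≠ 0) (h : x ^ n = 2 ^ n) :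
    embed x ^ n = 1 := by
  have key : ∀ m : ℕ, embed x ^ (m + 1) = ((2 : ℝ)⁻¹) ^ m • embed (x ^ (m + 1)) := by
    intro m
    induction m with
    | zero => simp
    | succ m ih => rw [pow_succ, ih, smul_mul_assoc, embed_mul_embed, smul_smul, ← pow_succ,
        ← pow_succ]
  obtain ⟨m, rfl⟩ := Nat.exists_eq_succ_of_ne_zero hn
  rw [key, h, embed, map_pow, map_ofNat, smul_smul, ← pow_succ,
    ← map_ofNat (algebraMap ℝ ℍ[ℝ]) 2, ← map_pow, Algebra.smul_def, ← map_mul, ← mul_pow,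
    inv_mul_cancel₀ two_ne_zero, one_pow, map_one]

section Roots

def signs : List ℤ := [1, -1]

theorem mem_pm_iff {ε : ℝ} : ε ∈ pm ↔ ∃ n ∈ signs, (n : ℝ) = ε := by
  simp [pm, signs, eq_comm]

def axisRoots (ε : ℤ) : List ℍ[GoldenInt] :=
  [⟨0, ⟨2 * ε, 0⟩, 0, 0⟩, ⟨0, 0, ⟨2 * ε, 0⟩, 0⟩, ⟨0, 0, 0, ⟨2 * ε, 0⟩⟩]

/-- The cyclic permutations of `ε₁ i + ε₂ φ j + ε₃ φ⁻¹ k`, using `φ⁻¹ = φ - 1`. -/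
def goldenRoots (ε₁ ε₂ ε₃ : ℤ) : List ℍ[GoldenInt] :=
  [⟨0, ⟨ε₁, 0⟩, ⟨0, ε₂⟩, ⟨-ε₃, ε₃⟩⟩, ⟨0, ⟨-ε₃, ε₃⟩, ⟨ε₁, 0⟩, ⟨0, ε₂⟩⟩,
    ⟨0, ⟨0, ε₂⟩, ⟨-ε₃, ε₃⟩, ⟨ε₁, 0⟩⟩]

def rootModel : List ℍ[GoldenInt] :=
  signs.flatMap axisRoots ++
    signs.flatMap fun ε₁ => signs.flatMap fun ε₂ => signs.flatMap fun ε₃ => goldenRoots ε₁ ε₂ ε₃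

theorem embed_pure (a b c : GoldenInt) : embed ⟨0, a, b, c⟩ = (2 : ℝ)⁻¹ •
    (GoldenInt.toReal a • qi + GoldenInt.toReal b • qj + GoldenInt.toReal c • qk) := by
  rw [embed_mk]
  simp only [qi, qj, qk, smul_mk, mk_add_mk, map_zero, mul_zero, mul_one, zero_add, add_zero]
  rfl

variable (ε ε₁ ε₂ ε₃ : ℤ)

theorem embed_axisRoot_i : embed ⟨0, ⟨2 * ε, 0⟩, 0, 0⟩ = (ε : ℝ) • qi := by
  rw [embed_pure, GoldenInt.toReal_mk_int]
  simp only [map_zero, zero_smul, add_zero, smul_smul]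
  congr 1
  push_cast
  ring

theorem embed_axisRoot_j : embed ⟨0, 0, ⟨2 * ε, 0⟩, 0⟩ = (ε : ℝ) • qj := by
  rw [embed_pure, GoldenInt.toReal_mk_int]
  simp only [map_zero, zero_smul, zero_add, add_zero, smul_smul]
  congr 1
  push_cast
  ring

theorem embed_axisRoot_k : embed ⟨0, 0, 0, ⟨2 * ε, 0⟩⟩ = (ε : ℝ) • qk := by
  rw [embed_pure, GoldenInt.toReal_mk_int]
  simp only [map_zero, zero_smul, zero_add, add_zero, smul_smul]
  congr 1
  push_cast
  ring

theorem embed_goldenRoot_1 : embed ⟨0, ⟨ε₁, 0⟩, ⟨0, ε₂⟩, ⟨-ε₃, ε₃⟩⟩ =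
    (2 : ℝ)⁻¹ • ((ε₁ : ℝ) • qi + ((ε₂ : ℝ) * τ) • qj + ((ε₃ : ℝ) * τ⁻¹) • qk) := by
  rw [embed_pure, GoldenInt.toReal_mk_int, GoldenInt.toReal_mk_mul_φ,
    GoldenInt.toReal_mk_mul_φ_inv]

theorem embed_goldenRoot_2 : embed ⟨0, ⟨-ε₃, ε₃⟩, ⟨ε₁, 0⟩, ⟨0, ε₂⟩⟩ =
    (2 : ℝ)⁻¹ • (((ε₃ : ℝ) * τ⁻¹) • qi + (ε₁ : ℝ) • qj + ((ε₂ : ℝ) * τ) • qk) := by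
  rw [embed_pure, GoldenInt.toReal_mk_int, GoldenInt.toReal_mk_mul_φ,
    GoldenInt.toReal_mk_mul_φ_inv]

theorem embed_goldenRoot_3 : embed ⟨0, ⟨0, ε₂⟩, ⟨-ε₃, ε₃⟩, ⟨ε₁, 0⟩⟩ =
    (2 : ℝ)⁻¹ • (((ε₂ : ℝ) * τ) • qi + ((ε₃ : ℝ) * τ⁻¹) • qj + (ε₁ : ℝ) • qk) := by
  rw [embed_pure, GoldenInt.toReal_mk_int, GoldenInt.toReal_mk_mul_φ,
    GoldenInt.toReal_mk_mul_φ_inv]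

theorem mem_rootsH3_iff {p : ℍ[ℝ]} : p ∈ rootsH3 ↔ ∃ x ∈ rootModel, embed x = p := by
  simp only [rootModel, List.mem_append, List.mem_flatMap]
  constructor
  · rintro (⟨ε, hε, hp⟩ | ⟨ε₁, h₁, ε₂, h₂, ε₃, h₃, hp⟩)
    · obtain ⟨n, hn, rfl⟩ := mem_pm_iff.1 hε
      rcases hp with rfl | rfl | rfl
      exacts [⟨_, Or.inl ⟨n, hn, .head _⟩, embed_axisRoot_i n⟩,
        ⟨_, Or.inl ⟨n, hn, .tail _ (.head _)⟩, embed_axisRoot_j n⟩,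
        ⟨_, Or.inl ⟨n, hn, .tail _ (.tail _ (.head _))⟩, embed_axisRoot_k n⟩]
    · obtain ⟨n₁, hn₁, rfl⟩ := mem_pm_iff.1 h₁
      obtain ⟨n₂, hn₂, rfl⟩ := mem_pm_iff.1 h₂
      obtain ⟨n₃, hn₃, rfl⟩ := mem_pm_iff.1 h₃
      rcases hp with rfl | rfl | rfl
      exacts [⟨_, Or.inr ⟨n₁, hn₁, n₂, hn₂, n₃, hn₃, .head _⟩, embed_goldenRoot_1 n₁ n₂ n₃⟩,
        ⟨_, Or.inr ⟨n₁, hn₁, n₂, hn₂, n₃, hn₃, .tail _ (.head _)⟩, embed_goldenRoot_2 n₁ n₂ n₃⟩,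
        ⟨_, Or.inr ⟨n₁, hn₁, n₂, hn₂, n₃, hn₃, .tail _ (.tail _ (.head _))⟩,
          embed_goldenRoot_3 n₁ n₂ n₃⟩]
  · rintro ⟨x, ⟨n, hn, hx⟩ | ⟨n₁, h₁, n₂, h₂, n₃, h₃, hx⟩, rfl⟩
    · have hε := mem_pm_iff.2 ⟨n, hn, rfl⟩
      rcases hx with _ | ⟨_, _ | ⟨_, _ | ⟨_, ⟨⟩⟩⟩⟩
      exacts [Or.inl ⟨n, hε, Or.inl (embed_axisRoot_i n)⟩,
        Or.inl ⟨n, hε, Or.inr (Or.inl (embed_axisRoot_j n))⟩,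
        Or.inl ⟨n, hε, Or.inr (Or.inr (embed_axisRoot_k n))⟩]
    · have hε₁ := mem_pm_iff.2 ⟨n₁, h₁, rfl⟩
      have hε₂ := mem_pm_iff.2 ⟨n₂, h₂, rfl⟩
      have hε₃ := mem_pm_iff.2 ⟨n₃, h₃, rfl⟩
      rcases hx with _ | ⟨_, _ | ⟨_, _ | ⟨_, ⟨⟩⟩⟩⟩
      exacts [Or.inr ⟨_, hε₁, _, hε₂, _, hε₃, Or.inl (embed_goldenRoot_1 n₁ n₂ n₃)⟩,
        Or.inr ⟨_, hε₁, _, hε₂, _, hε₃, Or.inr (Or.inl (embed_goldenRoot_2 n₁ n₂ n₃))⟩,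
        Or.inr ⟨_, hε₁, _, hε₂, _, hε₃, Or.inr (Or.inr (embed_goldenRoot_3 n₁ n₂ n₃))⟩]

end Roots

def cyc (x : ℍ[GoldenInt]) : ℍ[GoldenInt] := ⟨x.re, x.imK, x.imI, x.imJ⟩

def kleinPerms (x : ℍ[GoldenInt]) : List ℍ[GoldenInt] :=
  [x, ⟨x.imI, x.re, x.imK, x.imJ⟩, ⟨x.imJ, x.imK, x.re, x.imI⟩, ⟨x.imK, x.imJ, x.imI, x.re⟩]

/-- The twelve even permutations of the coordinates: the Klein four-group followed by the
cyclic permutations of `i, j, k`. -/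
def evenPerms (x : ℍ[GoldenInt]) : List ℍ[GoldenInt] :=
  kleinPerms x ++ kleinPerms (cyc x) ++ kleinPerms (cyc (cyc x))

def unitModel : List ℍ[GoldenInt] :=
  signs.flatMap fun ε => [⟨⟨2 * ε, 0⟩, 0, 0, 0⟩, ⟨0, ⟨2 * ε, 0⟩, 0, 0⟩, ⟨0, 0, ⟨2 * ε, 0⟩, 0⟩,
    ⟨0, 0, 0, ⟨2 * ε, 0⟩⟩]

def icosianModel : List ℍ[GoldenInt] :=
  unitModel ++
    (signs.flatMap fun a => signs.flatMap fun b => signs.flatMap fun c => signs.map fun d =>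
      ⟨⟨a, 0⟩, ⟨b, 0⟩, ⟨c, 0⟩, ⟨d, 0⟩⟩) ++
    (signs.flatMap fun a => signs.flatMap fun b => signs.flatMap fun c =>
      evenPerms ⟨0, ⟨a, 0⟩, ⟨0, b⟩, ⟨-c, c⟩⟩)

def genI : ℍ[GoldenInt] := ⟨0, ⟨2, 0⟩, 0, 0⟩
def genJ : ℍ[GoldenInt] := ⟨0, 0, ⟨2, 0⟩, 0⟩
/-- `½(-1 + i + j + k)`, of order 3. -/
def genA : ℍ[GoldenInt] := ⟨⟨-1, 0⟩, ⟨1, 0⟩, ⟨1, 0⟩, ⟨1, 0⟩⟩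
/-- `½(τ⁻¹ + τ i + j)`, of order 5. -/
def genB : ℍ[GoldenInt] := ⟨⟨-1, 1⟩, ⟨0, 1⟩, ⟨1, 0⟩, 0⟩

def generators : List ℍ[GoldenInt] := [genI, genJ, genA, genB]

/-- `1, i, j, -1`, doubled. -/
def quaternionWords : List ℍ[GoldenInt] := [2, genI, genJ, -2]

theorem generators_mul_mem :
    ∀ g ∈ generators, ∀ t ∈ icosianModel, ∃ s ∈ icosianModel, g * t = s + s := by
  simp only [← fastMul_eq_mul]
  decide +kernel

theorem quaternionGens_mul_mem :
    ∀ g ∈ [genI, genJ], ∀ t ∈ unitModel, ∃ s ∈ unitModel, g * t = s + s := by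
  simp only [← fastMul_eq_mul]
  decide +kernel

theorem unitModel_subset_products :
    ∀ x ∈ unitModel, ∃ a ∈ quaternionWords, ∃ b ∈ quaternionWords, a * b = x + x := by
  simp only [← fastMul_eq_mul]
  decide +kernel

theorem genI_mul_genI : genI * genI = -2 + -2 := by
  simp only [← fastMul_eq_mul]
  decide +kernel

theorem root_mul_self : ∀ p ∈ rootModel, p * p = -2 + -2 := by
  simp only [← fastMul_eq_mul]
  decide +kernel

theorem root_mul_genI_mem : ∀ p ∈ rootModel, ∃ s ∈ icosianModel, p * genI = s + s := by
  simp only [← fastMul_eq_mul]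
  decide +kernel

theorem generators_mem_rotors :
    ∀ g ∈ generators, ∃ p ∈ rootModel, ∃ q ∈ rootModel, p * q = g + g := by
  simp only [← fastMul_eq_mul]
  decide +kernel

theorem genA_pow : genA ^ 3 = 2 ^ 3 := by
  simp only [pow_succ, pow_zero, one_mul, ← fastMul_eq_mul]
  decide +kernel

theorem genB_pow : genB ^ 5 = 2 ^ 5 := by
  simp only [pow_succ, pow_zero, one_mul, ← fastMul_eq_mul]
  decide +kernel

def unitsOf (l : List ℍ[GoldenInt]) : Set ℍ[ℝ]ˣ := {u | ∃ x ∈ l, (u : ℍ[ℝ]) = embed x}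

theorem unitsOf_eq_preimage (l : List ℍ[GoldenInt]) :
    unitsOf l = Units.val ⁻¹' (embed '' {x | x ∈ l}) := by
  ext u
  simp [unitsOf, eq_comm]

theorem finite_unitsOf (l : List ℍ[GoldenInt]) : (unitsOf l).Finite := by
  rw [unitsOf_eq_preimage]
  exact (l.finite_toSet.image embed).preimage Units.val_injective.injOn

theorem ncard_unitsOf_le (l : List ℍ[GoldenInt]) : (unitsOf l).ncard ≤ l.length := by
  calc (unitsOf l).ncard ≤ (embed '' {x | x ∈ l}).ncard := by
        rw [unitsOf_eq_preimage]
        exact Set.ncard_le_ncard_of_injOn Units.val (fun u hu => hu)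
          Units.val_injective.injOn (l.finite_toSet.image embed)
    _ ≤ {x | x ∈ l}.ncard := Set.ncard_image_le l.finite_toSet
    _ ≤ l.length := by
        rw [← List.coe_toFinset, Set.ncard_coe_finset]
        exact l.toFinset_card_le

theorem ncard_unitsOf {l : List ℍ[GoldenInt]} (hl : l.Nodup) (h0 : 0 ∉ l) :
    (unitsOf l).ncard = l.length := by
  have himage : Units.val '' unitsOf l = embed '' {x | x ∈ l} := by
    ext y
    constructor
    · rintro ⟨u, ⟨x, hx, hux⟩, rfl⟩
      exact ⟨x, hx, hux.symm⟩
    · rintro ⟨x, hx, rfl⟩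
      exact ⟨Units.mk0 _ (embed_ne_zero (ne_of_mem_of_not_mem hx h0)), ⟨x, hx, rfl⟩, rfl⟩
  rw [← Set.ncard_image_of_injective _ Units.val_injective, himage,
    Set.ncard_image_of_injective _ embed_injective, ← List.coe_toFinset, Set.ncard_coe_finset,
    List.toFinset_card_of_nodup hl]

theorem exists_mem_unitsOf {l : List ℍ[GoldenInt]} {x : ℍ[GoldenInt]} (hx : x ∈ l) (h0 : x ≠ 0) :
    ∃ u ∈ unitsOf l, (u : ℍ[ℝ]) = embed x :=
  ⟨Units.mk0 _ (embed_ne_zero h0), ⟨x, hx, rfl⟩, rfl⟩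

theorem mul_mem_unitsOf {gs l : List ℍ[GoldenInt]}
    (h : ∀ g ∈ gs, ∀ t ∈ l, ∃ s ∈ l, g * t = s + s) {u v : ℍ[ℝ]ˣ} (hu : u ∈ unitsOf gs)
    (hv : v ∈ unitsOf l) : u * v ∈ unitsOf l := by
  obtain ⟨g, hg, hug⟩ := hu
  obtain ⟨t, ht, hvt⟩ := hv
  obtain ⟨s, hs, hgt⟩ := h g hg t ht
  exact ⟨s, hs, by rw [Units.val_mul, hug, hvt, embed_mul_embed_of_eq hgt]⟩

theorem pow_eq_one_of_val_eq {x : ℍ[GoldenInt]} {n : ℕ} (hn : n ≠ 0) (h : x ^ n = 2 ^ n)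
    {u : ℍ[ℝ]ˣ} (hu : (u : ℍ[ℝ]) = embed x) : u ^ n = 1 :=
  Units.ext (by rw [Units.val_pow_eq_pow_val, hu, embed_pow_eq_one hn h, Units.val_one])

theorem ne_one_of_val_eq {x : ℍ[GoldenInt]} (h : x ≠ 2) {u : ℍ[ℝ]ˣ} (hu : (u : ℍ[ℝ]) = embed x) :
    u ≠ 1 := fun h1 => h (embed_injective (by rw [← hu, h1, Units.val_one, embed_two]))

theorem unitsOf_quaternionWords_subset :
    unitsOf quaternionWords ⊆ Subgroup.closure (unitsOf [genI, genJ]) := by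
  rintro u ⟨x, hx, hux⟩
  obtain ⟨I, hI, hIval⟩ := exists_mem_unitsOf (l := [genI, genJ]) (.head _) (by decide)
  rcases hx with _ | ⟨_, _ | ⟨_, _ | ⟨_, _ | ⟨_, ⟨⟩⟩⟩⟩⟩
  · rw [show u = 1 from Units.ext (hux.trans embed_two)]
    exact Subgroup.one_mem _
  · exact Subgroup.subset_closure ⟨_, .head _, hux⟩
  · exact Subgroup.subset_closure ⟨_, .tail _ (.head _), hux⟩
  · rw [show u = I * I from Units.ext (by
      rw [hux, Units.val_mul, hIval, embed_mul_embed_of_eq genI_mul_genI])]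
    exact Subgroup.mul_mem _ (Subgroup.subset_closure hI) (Subgroup.subset_closure hI)

theorem coe_closure_quaternionGens :
    (Subgroup.closure (unitsOf [genI, genJ]) : Set ℍ[ℝ]ˣ) = unitsOf unitModel := by
  refine subset_antisymm (Subgroup.closure_subset_of_mul_mem (finite_unitsOf _)
    ⟨2, by decide, embed_two.symm⟩ fun u hu v hv => mul_mem_unitsOf quaternionGens_mul_mem hu hv) ?_
  rintro v ⟨x, hx, hvx⟩
  obtain ⟨a, ha, b, hb, hab⟩ := unitModel_subset_products x hx
  obtain ⟨A, hA, hAa⟩ := exists_mem_unitsOf ha (ne_of_mem_of_not_mem ha (by decide))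
  obtain ⟨B, hB, hBb⟩ := exists_mem_unitsOf hb (ne_of_mem_of_not_mem hb (by decide))
  rw [show v = A * B from Units.ext (by
    rw [hvx, Units.val_mul, hAa, hBb, embed_mul_embed_of_eq hab])]
  exact Subgroup.mul_mem _ (unitsOf_quaternionWords_subset hA) (unitsOf_quaternionWords_subset hB)

theorem card_closure_quaternionGens : Nat.card (Subgroup.closure (unitsOf [genI, genJ])) = 8 := by
  calc Nat.card (Subgroup.closure (unitsOf [genI, genJ]))
      = (Subgroup.closure (unitsOf [genI, genJ]) : Set ℍ[ℝ]ˣ).ncard := Nat.card_coe_set_eq _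
    _ = 8 := by
      rw [coe_closure_quaternionGens, ncard_unitsOf (by decide) (by decide)]
      rfl

theorem closure_generators_subset :
    (Subgroup.closure (unitsOf generators) : Set ℍ[ℝ]ˣ) ⊆ unitsOf icosianModel :=
  Subgroup.closure_subset_of_mul_mem (finite_unitsOf _) ⟨2, by decide, embed_two.symm⟩
    fun u hu v hv => mul_mem_unitsOf generators_mul_mem hu hv

theorem dvd_card_closure_generators : 120 ∣ Nat.card (Subgroup.closure (unitsOf generators)) := by
  set H := Subgroup.closure (unitsOf generators)
  have h8 : 8 ∣ Nat.card H := card_closure_quaternionGens ▸ Subgroup.card_dvd_of_le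
    (Subgroup.closure_mono fun u ⟨x, hx, hux⟩ => ⟨x, List.mem_append_left _ hx, hux⟩)
  obtain ⟨a, ha, hax⟩ := exists_mem_unitsOf (l := generators) (x := genA) (by decide) (by decide)
  obtain ⟨b, hb, hbx⟩ := exists_mem_unitsOf (l := generators) (x := genB) (by decide) (by decide)
  have : Fact (Nat.Prime 3) := ⟨by norm_num⟩
  have : Fact (Nat.Prime 5) := ⟨by norm_num⟩
  have h3 : 3 ∣ Nat.card H := orderOf_eq_prime (pow_eq_one_of_val_eq (by norm_num) genA_pow hax)
    (ne_one_of_val_eq (by decide) hax) ▸ H.orderOf_dvd_natCard (Subgroup.subset_closure ha)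
  have h5 : 5 ∣ Nat.card H := orderOf_eq_prime (pow_eq_one_of_val_eq (by norm_num) genB_pow hbx)
    (ne_one_of_val_eq (by decide) hbx) ▸ H.orderOf_dvd_natCard (Subgroup.subset_closure hb)
  exact Nat.Coprime.mul_dvd_of_dvd_of_dvd (by norm_num)
    (Nat.Coprime.mul_dvd_of_dvd_of_dvd (by norm_num) h8 h3) h5

theorem coe_closure_generators_and_card :
    (Subgroup.closure (unitsOf generators) : Set ℍ[ℝ]ˣ) = unitsOf icosianModel ∧
      Nat.card (Subgroup.closure (unitsOf generators)) = 120 :=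
  Subgroup.coe_eq_and_card_eq_of_subset (finite_unitsOf _) closure_generators_subset
    ((by decide : icosianModel.length = 120) ▸ ncard_unitsOf_le _) dvd_card_closure_generators

theorem rotorGenH3_subset_closure : rotorGenH3 ⊆ Subgroup.closure (unitsOf generators) := by
  rintro u ⟨p, hp, q, hq, hu⟩
  obtain ⟨x, hx, rfl⟩ := mem_rootsH3_iff.1 hp
  obtain ⟨y, hy, rfl⟩ := mem_rootsH3_iff.1 hq
  have hroot : ∀ z ∈ rootModel, z ≠ 0 := fun z hz => ne_of_mem_of_not_mem hz (by decide)
  have hI : genI ∈ rootModel := by decide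
  obtain ⟨P, -, hP⟩ := exists_mem_unitsOf hx (hroot x hx)
  obtain ⟨Q, -, hQ⟩ := exists_mem_unitsOf hy (hroot y hy)
  obtain ⟨R, -, hR⟩ := exists_mem_unitsOf hI (hroot _ hI)
  have mul_R_mem : ∀ z ∈ rootModel, ∀ Z : ℍ[ℝ]ˣ, (Z : ℍ[ℝ]) = embed z →
      Z * R ∈ Subgroup.closure (unitsOf generators) := fun z hz Z hZ => by
    obtain ⟨s, hs, hzs⟩ := root_mul_genI_mem z hz
    rw [← SetLike.mem_coe, coe_closure_generators_and_card.1]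
    exact ⟨s, hs, by rw [Units.val_mul, hZ, hR, embed_mul_embed_of_eq hzs]⟩
  have hsq : R * R = Q * Q := Units.ext (by
    rw [Units.val_mul, Units.val_mul, hR, hQ, embed_mul_embed_of_eq (root_mul_self _ hy),
      embed_mul_embed_of_eq (root_mul_self _ hI)])
  rw [show u = P * Q from Units.ext (by rw [hu, Units.val_mul, hP, hQ]),
    mul_eq_mul_mul_mul_inv hsq]
  exact Subgroup.mul_mem _ (Subgroup.mul_mem _ (mul_R_mem x hx P hP) (mul_R_mem _ hI R hR))
    (Subgroup.inv_mem _ (mul_R_mem y hy Q hQ))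

theorem unitsOf_generators_subset : unitsOf generators ⊆ rotorGenH3 := by
  rintro u ⟨g, hg, hug⟩
  obtain ⟨p, hp, q, hq, hpq⟩ := generators_mem_rotors g hg
  exact ⟨embed p, mem_rootsH3_iff.2 ⟨p, hp, rfl⟩, embed q, mem_rootsH3_iff.2 ⟨q, hq, rfl⟩,
    by rw [hug, embed_mul_embed_of_eq hpq]⟩

end Icosian

/-- The subgroup of `ℍˣ` generated by all products `p·q` of pairs of the 30
unit roots of `H₃` has exactly 120 elements: the 30 reflections of the
icosahedral group `H₃` generate exactly 120 rotors (the binary icosahedral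
group `2I`). -/
theorem rotor_group_H3 :
    Nat.card (Subgroup.closure rotorGenH3 : Subgroup (Quaternion ℝ)ˣ) = 120 := by
  have h : Subgroup.closure rotorGenH3 = Subgroup.closure (Icosian.unitsOf Icosian.generators) :=
    le_antisymm ((Subgroup.closure_le _).2 Icosian.rotorGenH3_subset_closure)
      (Subgroup.closure_mono Icosian.unitsOf_generators_subset)
  rw [h]
  exact Icosian.coe_closure_generators_and_card.2
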